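/- Let L : Λ²(ℝ^8) → Λ²(ℝ^8) be the linear map L(α) = *(Φ₀ ∧ α), where Φ₀ is the standard Cayley form and * the standard Hodge star. Then L satisfies the quadratic relation L² = 2L + 3·Id, equivalently (L − 3·Id)∘(L + Id) = 0. -/

import Mathlib

open Finset

noncomputable section

/-- Exterior algebra of ℝ⁸ in coefficients on the orthonormal coframe `e^1,…,e^8`:
a (possibly inhomogeneous) form is a coefficient function on index sets. -/
abbrev Forms8 : Type := Finset (Fin 8) → ℝ

/-- Sign `(-1)^{#inversions}` of merging two (disjoint) increasing index sets. -/
def csign (s t : Finset (Fin 8)) : ℝ :=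
  (-1 : ℝ) ^ (((s ×ˢ t).filter fun p => p.2 < p.1).card)

/-- Wedge product of forms. -/
def wedge (α β : Forms8) : Forms8 := fun u =>
  ∑ s ∈ u.powerset, csign s (u \ s) * α s * β (u \ s)

/-- Hodge star for the standard Euclidean metric and the orientation `e^{12345678}`. -/
def hodge (α : Forms8) : Forms8 := fun u => csign uᶜ u * α uᶜ

/-- The basis form `e^S` (indices increasing). -/
def bE (s : Finset (Fin 8)) : Forms8 := fun u => if u = s then 1 else 0

/-- `α` is homogeneous of degree `k`. -/
def isDeg (k : ℕ) (α : Forms8) : Prop := ∀ s : Finset (Fin 8), s.card ≠ k → α s = 0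

/-- The standard Cayley 4-form `Φ₀` (indices `1,…,8` rendered as `0,…,7`). -/
def Phi0 : Forms8 :=
  bE {0,1,2,3} + bE {0,1,4,5} + bE {0,1,6,7} + bE {0,2,4,6}
  - bE {0,2,5,7} - bE {0,3,4,7} - bE {0,3,5,6}
  + bE {4,5,6,7} + bE {2,3,6,7} + bE {2,3,4,5} + bE {1,3,5,7}
  - bE {1,3,4,6} - bE {1,2,5,6} - bE {1,2,4,7}
/-- The operator `L(α) = ⋆(Φ₀ ∧ α)` on 2-forms. -/
def Lop (α : Forms8) : Forms8 := hodge (wedge Phi0 α)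

/-!
`L` maps 2-forms to 2-forms, and on the basis `e^{ij}` it acts by a `28 × 28` integer matrix `M`
whose entries are coefficients of `Φ₀` up to the signs of merging index sets. The relation
`L² = 2L + 3` is then the matrix identity `M² = 2M + 3`, verified by evaluation over `ℤ`.
Conceptually, `Λ² = Λ²₇ ⊕ Λ²₂₁` under `Spin(7)`, with `L = 3` on `Λ²₇` and `L = -1` on `Λ²₂₁`.
-/

theorem isDeg_wedge {j k : ℕ} {α β : Forms8} (hα : isDeg j α) (hβ : isDeg k β) :
    isDeg (j + k) (wedge α β) := by
  intro u hu
  refine sum_eq_zero fun s hs => ?_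
  by_cases hs' : s.card = j
  · have : (u \ s).card ≠ k := by
      have := card_le_card (mem_powerset.1 hs)
      rw [card_sdiff_of_subset (mem_powerset.1 hs)]
      omega
    rw [hβ _ this, mul_zero]
  · rw [hα _ hs', mul_zero, zero_mul]

theorem isDeg_hodge {k : ℕ} {α : Forms8} (hk : k ≤ 8) (hα : isDeg k α) :
    isDeg (8 - k) (hodge α) := by
  intro u hu
  have : uᶜ.card ≠ k := by
    have := card_le_univ u
    rw [card_compl, Fintype.card_fin] at *
    omega
  rw [hodge, hα _ this, mul_zero]

theorem isDeg_Phi0 : isDeg 4 Phi0 := by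
  intro s hs
  have hbE : ∀ t : Finset (Fin 8), t.card = 4 → bE t s = 0 := by
    rintro t ht
    exact if_neg (by rintro rfl; exact hs ht)
  simp (disch := decide) only [Phi0, Pi.add_apply, Pi.sub_apply, hbE]
  norm_num

theorem isDeg_Lop {k : ℕ} {α : Forms8} (hk : k ≤ 4) (hα : isDeg k α) :
    isDeg (4 - k) (Lop α) := by
  have := isDeg_hodge (by omega) (isDeg_wedge isDeg_Phi0 hα)
  rwa [show 8 - (4 + k) = 4 - k by omega] at this

theorem isDeg.add {k : ℕ} {α β : Forms8} (hα : isDeg k α) (hβ : isDeg k β) :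
    isDeg k (α + β) := fun s hs => by simp [hα s hs, hβ s hs]

theorem isDeg.smul {k : ℕ} {α : Forms8} (c : ℝ) (hα : isDeg k α) : isDeg k (c • α) :=
  fun s hs => by simp [hα s hs]

open Matrix

abbrev TwoSet : Type := {s : Finset (Fin 8) // s.card = 2}

def twoCoeffs (α : Forms8) : TwoSet → ℝ := fun s => α s

theorem isDeg.eq_of_twoCoeffs_eq {α β : Forms8} (hα : isDeg 2 α) (hβ : isDeg 2 β)
    (h : twoCoeffs α = twoCoeffs β) : α = β := by
  funext s
  by_cases hs : s.card = 2
  · exact congrFun h ⟨s, hs⟩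
  · rw [hα s hs, hβ s hs]

theorem Finset.sum_powerset_sdiff {ι M : Type*} [DecidableEq ι] [AddCommMonoid M] (w : Finset ι)
    (f : Finset ι → M) : ∑ s ∈ w.powerset, f (w \ s) = ∑ s ∈ w.powerset, f s :=
  sum_nbij' (w \ ·) (w \ ·) (by simp) (by simp)
    (fun s hs => Finset.sdiff_sdiff_eq_self (mem_powerset.1 hs))
    (fun s hs => Finset.sdiff_sdiff_eq_self (mem_powerset.1 hs)) fun _ _ => rfl

/- Integer copies of `csign` and `Phi0`: equality of reals is not decidable, so the matrix of `L`
is computed over `ℤ`. -/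
def csignInt (s t : Finset (Fin 8)) : ℤ :=
  (-1 : ℤ) ^ (((s ×ˢ t).filter fun p => p.2 < p.1).card)

def bEInt (s : Finset (Fin 8)) : Finset (Fin 8) → ℤ := fun u => if u = s then 1 else 0

def phi0Int : Finset (Fin 8) → ℤ :=
  bEInt {0,1,2,3} + bEInt {0,1,4,5} + bEInt {0,1,6,7} + bEInt {0,2,4,6}
  - bEInt {0,2,5,7} - bEInt {0,3,4,7} - bEInt {0,3,5,6}
  + bEInt {4,5,6,7} + bEInt {2,3,6,7} + bEInt {2,3,4,5} + bEInt {1,3,5,7}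
  - bEInt {1,3,4,6} - bEInt {1,2,5,6} - bEInt {1,2,4,7}

theorem csign_eq_cast (s t : Finset (Fin 8)) : csign s t = csignInt s t := by
  simp [csign, csignInt]

theorem Phi0_eq_cast (u : Finset (Fin 8)) : Phi0 u = phi0Int u := by
  simp [Phi0, phi0Int, bE, bEInt, apply_ite (Int.cast : ℤ → ℝ)]

def lopKernel (u t : Finset (Fin 8)) : ℤ :=
  if t ⊆ uᶜ then csignInt uᶜ u * csignInt (uᶜ \ t) t * phi0Int (uᶜ \ t) else 0

theorem Lop_apply (α : Forms8) (u : Finset (Fin 8)) :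
    Lop α u = ∑ t, (lopKernel u t : ℝ) * α t := by
  have hsupp :
      ∑ t, (lopKernel u t : ℝ) * α t = ∑ t ∈ uᶜ.powerset, (lopKernel u t : ℝ) * α t := by
    rw [← sum_filter_of_ne (p := (· ⊆ uᶜ))]
    · congr 1; ext t; simp
    · intro t _ h; by_contra ht; simp [lopKernel, ht] at h
  rw [hsupp, ← sum_powerset_sdiff, Lop, hodge, wedge, mul_sum]
  refine sum_congr rfl fun s hs => ?_
  rw [lopKernel, if_pos sdiff_subset, Finset.sdiff_sdiff_eq_self (mem_powerset.1 hs),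
    csign_eq_cast, csign_eq_cast, Phi0_eq_cast]
  push_cast
  ring

def lopMatrix : Matrix TwoSet TwoSet ℤ := Matrix.of fun u t => lopKernel u t

set_option maxRecDepth 100000 in
set_option maxHeartbeats 4000000 in
theorem lopMatrix_sq : lopMatrix * lopMatrix = 2 • lopMatrix + 3 • 1 := by
  decide

theorem lopMatrix_map_sq :
    lopMatrix.map (Int.cast : ℤ → ℝ) * lopMatrix.map Int.cast
      = 2 • lopMatrix.map Int.cast + 3 • 1 := by
  have := congrArg (Int.castRingHom ℝ).mapMatrix lopMatrix_sq
  rwa [map_mul, map_add, map_nsmul, map_nsmul, map_one] at this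

theorem twoCoeffs_Lop {α : Forms8} (hα : isDeg 2 α) :
    twoCoeffs (Lop α) = lopMatrix.map (Int.cast : ℤ → ℝ) *ᵥ twoCoeffs α := by
  funext u
  rw [twoCoeffs, Lop_apply,
    ← Fintype.sum_subtype_add_sum_subtype (fun t : Finset (Fin 8) => t.card = 2)]
  have hoff : ∑ t : {t : Finset (Fin 8) // ¬t.card = 2}, (lopKernel u t : ℝ) * α t = 0 :=
    sum_eq_zero fun t _ => by rw [hα t t.2, mul_zero]
  rw [hoff, add_zero]
  rfl

/-- On 2-forms, `L² = 2L + 3·Id`, equivalently `(L − 3·Id)∘(L + Id) = 0`. -/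
theorem Lop_quadratic_relation :
    ∀ α : Forms8, isDeg 2 α →
      Lop (Lop α) = (2 : ℝ) • Lop α + (3 : ℝ) • α := by
  intro α hα
  have hLα : isDeg 2 (Lop α) := isDeg_Lop (by norm_num) hα
  refine (isDeg_Lop (by norm_num) hLα).eq_of_twoCoeffs_eq
    ((hLα.smul 2).add (hα.smul 3)) ?_
  rw [twoCoeffs_Lop hLα, twoCoeffs_Lop hα, mulVec_mulVec, lopMatrix_map_sq, add_mulVec,
    smul_mulVec, smul_mulVec, one_mulVec, ← twoCoeffs_Lop hα]
  funext s
  simp [twoCoeffs]
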